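/- Let X^{(1)},...,X^{(M)} be n×n complex matrices and let Y be the Mn×Mn block matrix whose (i,i+1) block is X^{(i)} for 1≤i≤M−1, whose (M,1) block is X^{(M)}, and all other blocks zero. Then for every complex number z, det(z^M·I_n − X^{(1)}X^{(2)}⋯X^{(M)}) = ±det(Y − z·I_{Mn}); in particular every eigenvalue λ of the product X^{(1)}⋯X^{(M)} is an eigenvalue of Y^M. -/

import Mathlib

/-!
Put `W₁ = z ^ (M-1) • 1` and `W_j = z ^ (j-2) • X_j ⋯ X_M` for `2 ≤ j ≤ M`, so that
`X_j W_{j+1} = z • W_j` for `j ≥ 2` (indices mod `M`) while `X₁ W₂ = X₁ ⋯ X_M`. Right-multiplying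
`Y - z • 1` by the matrix `E` that is the identity except for its first block column
`(W₁, …, W_M)` therefore gives a block upper triangular matrix with diagonal blocks
`X₁ ⋯ X_M - z ^ M • 1, -z • 1, …, -z • 1`, while `E` is block lower triangular with determinant
`z ^ ((M-1) n)`. This proves the identity multiplied by `z ^ ((M-1) n)`; over `R[X]` with `z = X`
that factor cancels, and evaluation gives it for all `z`. If `λ = w ^ M` is an eigenvalue of the
product, the identity makes `w` an eigenvalue of `Y`, hence `λ` an eigenvalue of `Y ^ M`.
-/

open Matrix

theorem Fin.val_add_one_of_add_one_ne_zero {M : ℕ} [NeZero M] {i : Fin M} (h : i + 1 ≠ 0) :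
    ((i + 1 : Fin M) : ℕ) = i + 1 := by
  obtain ⟨m, rfl⟩ := Nat.exists_eq_add_one_of_ne_zero (NeZero.ne M)
  refine Fin.val_add_one_of_lt (Fin.lt_last_iff_ne_last.2 ?_)
  rintro rfl
  exact h (Fin.last_add_one m)

theorem Fin.val_add_one_of_add_one_eq_zero {M : ℕ} [NeZero M] {i : Fin M} (h : i + 1 = 0) :
    (i : ℕ) + 1 = M := by
  obtain ⟨m, rfl⟩ := Nat.exists_eq_add_one_of_ne_zero (NeZero.ne M)
  have hi : i = Fin.last m := by
    by_contra hi
    have := Fin.val_add_one_of_lt (Fin.lt_last_iff_ne_last.2 hi)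
    simp [h] at this
  simp [hi]

namespace Matrix

variable {R : Type*} [CommRing R]

section BlockTriangularFst

variable {ι κ : Type*} [Fintype ι] [Fintype κ] [DecidableEq ι] [DecidableEq κ]
  (A : Matrix (ι × κ) (ι × κ) R)

theorem det_toSquareBlock_fst (i : ι) :
    (A.toSquareBlock Prod.fst i).det = (A.submatrix (i, ·) (i, ·)).det := by
  let e : κ ≃ {p : ι × κ // p.1 = i} :=
    { toFun k := ⟨(i, k), rfl⟩, invFun p := p.1.2, left_inv _ := rfl,
      right_inv := by rintro ⟨⟨_, k⟩, rfl⟩; rfl }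
  exact (det_submatrix_equiv_self e _).symm

theorem BlockTriangular.det_fst [LinearOrder ι] (hA : A.BlockTriangular Prod.fst) :
    A.det = ∏ i, (A.submatrix (i, ·) (i, ·)).det := by
  rw [hA.det]
  cases isEmpty_or_nonempty κ
  · simp
  · rw [Finset.image_univ_of_surjective Prod.fst_surjective]
    exact Finset.prod_congr rfl fun i _ => det_toSquareBlock_fst A i

theorem BlockTriangular.det_fst_of_toDual [LinearOrder ι]
    (hA : A.BlockTriangular (OrderDual.toDual ∘ Prod.fst)) :
    A.det = ∏ i, (A.submatrix (i, ·) (i, ·)).det := by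
  rw [← det_transpose, BlockTriangular.det_fst Aᵀ fun _ _ h => hA h]
  simp only [← transpose_submatrix, det_transpose]

end BlockTriangularFst

section CyclicLinearization

variable {M : ℕ} {κ : Type*} (X : Fin M → Matrix κ κ R) (z : R)

section SuffixProd

variable [Fintype κ] [DecidableEq κ]

def shiftedSuffixProd (j : ℕ) : Matrix κ κ R :=
  z ^ (j - 1) • ((List.ofFn X).drop j).prod

theorem mul_shiftedSuffixProd_succ {j : ℕ} (hj : j < M) :
    X ⟨j, hj⟩ * shiftedSuffixProd X z (j + 1) = z ^ j • ((List.ofFn X).drop j).prod := by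
  rw [shiftedSuffixProd, mul_smul_comm, Nat.add_sub_cancel,
    List.drop_eq_getElem_cons (i := j) (l := List.ofFn X) (by simpa), List.prod_cons,
    List.getElem_ofFn]

end SuffixProd

variable [NeZero M]

def cyclicLinearization : Matrix (Fin M × κ) (Fin M × κ) R :=
  of fun p q => if q.1 = p.1 + 1 then X p.1 p.2 q.2 else 0

theorem cyclicLinearization_apply (i j : Fin M) (k l : κ) :
    cyclicLinearization X (i, k) (j, l) = if j = i + 1 then X i k l else 0 := rfl

theorem cyclicLinearization_map {S : Type*} [CommRing S] (f : R →+* S) :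
    (cyclicLinearization X).map f = cyclicLinearization fun i => (X i).map f := by
  ext ⟨i, k⟩ ⟨j, l⟩
  simp [cyclicLinearization_apply, apply_ite f]

variable [Fintype κ]

theorem cyclicLinearization_mul_apply {ν : Type*} (B : Matrix (Fin M × κ) ν R) (i : Fin M)
    (k : κ) (c : ν) :
    (cyclicLinearization X * B) (i, k) c = (X i * B.submatrix (i + 1, ·) id) k c := by
  simp [mul_apply, Fintype.sum_prod_type, cyclicLinearization_apply, ite_mul]

variable [DecidableEq κ]

-- `M` stands in for the index `0`, so that `mul_cyclicColumnOpBlock_add_one` holds across the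
-- wrap-around `(M - 1) + 1 = 0`.
def cyclicColumnOpBlock (i : Fin M) : Matrix κ κ R :=
  shiftedSuffixProd X z (if i = 0 then M else i)

def cyclicColumnOp : Matrix (Fin M × κ) (Fin M × κ) R :=
  of fun p q => if q.1 = 0 then cyclicColumnOpBlock X z p.1 p.2 q.2 else (1 : Matrix _ _ R) p q

theorem cyclicColumnOpBlock_zero : cyclicColumnOpBlock X z 0 = z ^ (M - 1) • 1 := by
  simp [cyclicColumnOpBlock, shiftedSuffixProd, List.drop_eq_nil_of_le]

theorem mul_cyclicColumnOpBlock_add_one (i : Fin M) :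
    X i * cyclicColumnOpBlock X z (i + 1) = z ^ (i : ℕ) • ((List.ofFn X).drop i).prod := by
  rw [cyclicColumnOpBlock, ← mul_shiftedSuffixProd_succ X z i.isLt]
  split_ifs with h
  · rw [Fin.val_add_one_of_add_one_eq_zero h]
  · rw [Fin.val_add_one_of_add_one_ne_zero h]

theorem mul_cyclicColumnOpBlock_add_one_of_ne_zero {i : Fin M} (hi : i ≠ 0) :
    X i * cyclicColumnOpBlock X z (i + 1) = z • cyclicColumnOpBlock X z i := by
  rw [mul_cyclicColumnOpBlock_add_one, cyclicColumnOpBlock, if_neg hi, shiftedSuffixProd,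
    smul_smul, ← pow_succ', Nat.sub_add_cancel (Nat.pos_of_ne_zero (Fin.val_ne_zero_iff.2 hi))]

theorem mul_cyclicColumnOpBlock_one :
    X 0 * cyclicColumnOpBlock X z 1 = (List.ofFn X).prod := by
  rw [← zero_add 1, mul_cyclicColumnOpBlock_add_one]
  simp

theorem det_cyclicColumnOp :
    (cyclicColumnOp X z).det = (z ^ (M - 1)) ^ Fintype.card κ := by
  rw [BlockTriangular.det_fst_of_toDual, Fintype.prod_eq_mul_prod_compl 0]
  · have h0 : (cyclicColumnOp X z).submatrix (0, ·) (0, ·) = z ^ (M - 1) • 1 := by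
      ext k l
      simp [cyclicColumnOp, cyclicColumnOpBlock_zero]
    have hi : ∀ i ∈ ({0}ᶜ : Finset (Fin M)),
        (cyclicColumnOp X z).submatrix (i, ·) (i, ·) = 1 := by
      intro i hi
      ext k l
      simp_all [cyclicColumnOp, one_apply]
    rw [h0, Finset.prod_congr rfl fun i hi' => by rw [hi i hi'], det_smul, det_one]
    simp
  · rintro ⟨i, k⟩ ⟨j, l⟩ (h : i < j)
    simp [cyclicColumnOp, (Fin.zero_le i).trans_lt h |>.ne', h.ne]

theorem mul_cyclicColumnOp_apply_of_ne_zero (A : Matrix (Fin M × κ) (Fin M × κ) R)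
    (p : Fin M × κ) {j : Fin M} (hj : j ≠ 0) (l : κ) :
    (A * cyclicColumnOp X z) p (j, l) = A p (j, l) := by
  simp [mul_apply, cyclicColumnOp, hj, one_apply]

theorem cyclicLinearization_sub_smul_mul_cyclicColumnOp_apply_zero (i : Fin M) (k l : κ) :
    ((cyclicLinearization X - z • 1) * cyclicColumnOp X z) (i, k) (0, l) =
      (X i * cyclicColumnOpBlock X z (i + 1) - z • cyclicColumnOpBlock X z i) k l := by
  rw [sub_mul, sub_apply, cyclicLinearization_mul_apply, smul_mul, one_mul]
  simp [mul_apply, cyclicColumnOp]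

theorem blockTriangular_cyclicLinearization_sub_smul_mul_cyclicColumnOp :
    ((cyclicLinearization X - z • 1) * cyclicColumnOp X z).BlockTriangular Prod.fst := by
  rintro ⟨i, k⟩ ⟨j, l⟩ (h : j < i)
  have hi : i ≠ 0 := ((Fin.zero_le j).trans_lt h).ne'
  by_cases hj : j = 0
  · subst hj
    simp [cyclicLinearization_sub_smul_mul_cyclicColumnOp_apply_zero,
      mul_cyclicColumnOpBlock_add_one_of_ne_zero X z hi]
  · have hji : j ≠ i + 1 := by
      rintro rfl
      rw [Fin.lt_def, Fin.val_add_one_of_add_one_ne_zero hj] at h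
      omega
    simp [mul_cyclicColumnOp_apply_of_ne_zero X z _ _ hj, cyclicLinearization_apply, hji, h.ne']

theorem det_cyclicLinearization_sub_smul_mul_cyclicColumnOp :
    ((cyclicLinearization X - z • 1) * cyclicColumnOp X z).det =
      ((List.ofFn X).prod - z ^ M • 1).det * ((-z) ^ Fintype.card κ) ^ (M - 1) := by
  set T := (cyclicLinearization X - z • 1) * cyclicColumnOp X z
  have h0 : T.submatrix (0, ·) (0, ·) = (List.ofFn X).prod - z ^ M • 1 := by
    ext k l
    simp [T, cyclicLinearization_sub_smul_mul_cyclicColumnOp_apply_zero,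
      mul_cyclicColumnOpBlock_one, cyclicColumnOpBlock_zero, smul_smul, ← pow_succ',
      Nat.sub_one_add_one (NeZero.ne M)]
  have hi : ∀ i ∈ ({0}ᶜ : Finset (Fin M)), T.submatrix (i, ·) (i, ·) = -z • 1 := by
    intro i hi
    have hi : i ≠ 0 := by simpa using hi
    have hM : M ≠ 1 := by rintro rfl; exact hi (Subsingleton.elim _ _)
    ext k l
    by_cases hkl : k = l <;>
      simp [T, mul_cyclicColumnOp_apply_of_ne_zero X z _ _ hi, cyclicLinearization_apply,
        hM, hkl]
  rw [(blockTriangular_cyclicLinearization_sub_smul_mul_cyclicColumnOp X z).det_fst,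
    Fintype.prod_eq_mul_prod_compl 0, h0, Finset.prod_congr rfl fun i hi' => by rw [hi i hi'],
    det_smul, det_one, mul_one]
  simp [Finset.card_compl]

theorem det_smul_one_sub_list_prod_mul_pow :
    (z ^ M • 1 - (List.ofFn X).prod).det * z ^ ((M - 1) * Fintype.card κ) =
      (-1) ^ (M * Fintype.card κ) * (cyclicLinearization X - z • 1).det *
        z ^ ((M - 1) * Fintype.card κ) := by
  have h := det_cyclicLinearization_sub_smul_mul_cyclicColumnOp X z
  rw [det_mul, det_cyclicColumnOp, ← neg_sub (z ^ M • 1), det_neg] at h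
  obtain ⟨m, rfl⟩ := Nat.exists_eq_add_one_of_ne_zero (NeZero.ne M)
  simp only [Nat.add_sub_cancel] at h ⊢
  rw [neg_pow z] at h
  have hs : ((-1 : R) ^ ((m + 1) * Fintype.card κ)) ^ 2 = 1 := by
    rw [← pow_mul, mul_comm, pow_mul, neg_one_sq, one_pow]
  linear_combination -(-1 : R) ^ ((m + 1) * Fintype.card κ) * h -
    (z ^ (m + 1) • 1 - (List.ofFn X).prod).det * z ^ (m * Fintype.card κ) * hs

theorem det_smul_one_sub_list_prod :
    (z ^ M • 1 - (List.ofFn X).prod).det =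
      (-1) ^ (M * Fintype.card κ) * (cyclicLinearization X - z • 1).det := by
  -- `X ^ _` is a nonzerodivisor in `R[X]`: cancel it there, then evaluate at `z`.
  have h := (Polynomial.isRegular_X_pow _).right
    (det_smul_one_sub_list_prod_mul_pow (fun i => (X i).map Polynomial.C) Polynomial.X)
  have := congrArg (Polynomial.evalRingHom z) h
  simp only [map_mul, map_pow, map_neg, map_one, RingHom.map_det, map_sub] at this
  rw [map_list_prod, List.map_ofFn, RingHom.mapMatrix_apply _ (cyclicLinearization _),
    cyclicLinearization_map] at this
  simpa [smul_one_eq_diagonal, Function.comp_def, Matrix.map_map] using this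

end CyclicLinearization

section Spectrum

variable {K : Type*} [Field K] {ι : Type*} [Fintype ι] [DecidableEq ι]

theorem mem_spectrum_iff_det_smul_one_sub_eq_zero {A : Matrix ι ι K} {r : K} :
    r ∈ spectrum K A ↔ (r • 1 - A).det = 0 := by
  rw [mem_spectrum_iff_isRoot_charpoly, Polynomial.IsRoot, eval_charpoly, smul_one_eq_diagonal]
  rfl

theorem spectrum_list_prod_subset_spectrum_cyclicLinearization_pow [IsAlgClosed K] {M : ℕ}
    [NeZero M] (X : Fin M → Matrix ι ι K) :
    spectrum K (List.ofFn X).prod ⊆ spectrum K (cyclicLinearization X ^ M) := by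
  intro r hr
  obtain ⟨w, rfl⟩ := IsAlgClosed.exists_pow_nat_eq r (NeZero.pos M)
  refine spectrum.pow_mem_pow _ M ?_
  rw [mem_spectrum_iff_det_smul_one_sub_eq_zero, det_smul_one_sub_list_prod] at hr
  rw [mem_spectrum_iff_det_smul_one_sub_eq_zero, ← neg_sub, det_neg,
    (mul_eq_zero.mp hr).resolve_left (pow_ne_zero _ (neg_ne_zero.mpr one_ne_zero)), mul_zero]

end Spectrum

end Matrix

/-- Cyclic block linearization: `det(z^M I - X^{(1)}⋯X^{(M)}) = ± det(Y - z I)`,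
and every eigenvalue of the product is an eigenvalue of `Y^M`. -/
theorem stmt0 {M n : ℕ} [NeZero M] (X : Fin M → Matrix (Fin n) (Fin n) ℂ)
    (Y : Matrix (Fin M × Fin n) (Fin M × Fin n) ℂ)
    (hY : ∀ (i j : Fin M) (k l : Fin n),
      Y (i, k) (j, l) = if j = i + 1 then X i k l else 0)
    (z : ℂ) :
    (∃ s : ℂ, (s = 1 ∨ s = -1) ∧
      Matrix.det (z ^ M • (1 : Matrix (Fin n) (Fin n) ℂ) - (List.ofFn X).prod)
        = s * Matrix.det (Y - z • 1)) ∧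
    ∀ lam : ℂ, lam ∈ spectrum ℂ (List.ofFn X).prod → lam ∈ spectrum ℂ (Y ^ M) := by
  obtain rfl : Y = cyclicLinearization X := by
    ext ⟨i, k⟩ ⟨j, l⟩
    exact hY i j k l
  refine ⟨⟨(-1) ^ (M * n), neg_one_pow_eq_or ℂ _, ?_⟩,
    fun _ hlam => spectrum_list_prod_subset_spectrum_cyclicLinearization_pow X hlam⟩
  simpa using det_smul_one_sub_list_prod X z
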